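/- Equivalence of walks on ℤ² (Theorem 1): Let σ_M : ℤ² → {1,-1} be a mirror environment and define σ_R(x,y) = (-1)^{|x|+|y|+1} σ_M(x,y). Then the walk on the flipping mirror environment σ_M and the walk on the flipping rotator environment σ_R, both starting at (0,0) with velocity (1,0), have identical trajectories: the positions (x(t),y(t)) agree for all t ∈ ℕ, and moreover the velocities agree at all times. -/
import Mathlib

def sqVel (k : ZMod 4) : ℤ × ℤ :=
  if k = 0 then (1, 0) else if k = 1 then (0, 1) else if k = 2 then (-1, 0) else (0, -1)

def sqM (k : ZMod 4) (σ : ℤ) : ZMod 4 :=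
  if σ = 1 then
    (if k = 0 then 1 else if k = 1 then 0 else if k = 2 then 3 else 2)
  else
    (if k = 0 then 3 else if k = 1 then 2 else if k = 2 then 1 else 0)

def sqR (k : ZMod 4) (σ : ℤ) : ZMod 4 := k - (σ : ZMod 4)

structure SqState where
  pos : ℤ × ℤ
  vel : ZMod 4
  env : ℤ × ℤ → ℤ

def sqStep (f : ZMod 4 → ℤ → ZMod 4) (s : SqState) : SqState :=
  let k' := f s.vel (s.env s.pos)
  { pos := s.pos + sqVel k', vel := k',
    env := fun q => if q = s.pos then -s.env s.pos else s.env q }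

def sqWalk (f : ZMod 4 → ℤ → ZMod 4) (s₀ : SqState) (t : ℕ) : SqState :=
  (sqStep f)^[t] s₀

lemma step_pos (f : ZMod 4 → ℤ → ZMod 4) (s : SqState) :
    (sqStep f s).pos = s.pos + sqVel (f s.vel (s.env s.pos)) := rfl
lemma step_vel (f : ZMod 4 → ℤ → ZMod 4) (s : SqState) :
    (sqStep f s).vel = f s.vel (s.env s.pos) := rfl
lemma step_env (f : ZMod 4 → ℤ → ZMod 4) (s : SqState) (q : ℤ × ℤ) :
    (sqStep f s).env q = if q = s.pos then -s.env s.pos else s.env q := rfl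

def SqInv (sM sR : SqState) : Prop :=
  sM.pos = sR.pos ∧ sM.vel = sR.vel ∧
  (∀ p, sM.env p = 1 ∨ sM.env p = -1) ∧
  (∀ p : ℤ × ℤ, sR.env p = (-1) ^ (p.1.natAbs + p.2.natAbs + 1) * sM.env p) ∧
  ((sM.vel = 0 ∨ sM.vel = 2) ↔ Even (sM.pos.1 + sM.pos.2))

lemma sq_eps_even (p : ℤ × ℤ) (h : Even (p.1 + p.2)) :
    ((-1 : ℤ)) ^ (p.1.natAbs + p.2.natAbs + 1) = -1 := by
  have h1 : Even (p.1.natAbs + p.2.natAbs) := by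
    rw [Nat.even_add, Int.natAbs_even, Int.natAbs_even]
    rw [Int.even_add] at h; exact h
  rw [pow_succ, h1.neg_one_pow, one_mul]

lemma sq_eps_odd (p : ℤ × ℤ) (h : ¬ Even (p.1 + p.2)) :
    ((-1 : ℤ)) ^ (p.1.natAbs + p.2.natAbs + 1) = 1 := by
  have h1 : ¬ Even (p.1.natAbs + p.2.natAbs) := by
    rw [Nat.even_add, Int.natAbs_even, Int.natAbs_even]
    rw [Int.even_add] at h; exact h
  have h2 : Even (p.1.natAbs + p.2.natAbs + 1) :=
    (Nat.not_even_iff_odd.mp h1).add_one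
  rw [h2.neg_one_pow]

lemma sq_inv_step {sM sR : SqState} (h : SqInv sM sR) :
    SqInv (sqStep sqM sM) (sqStep sqR sR) := by
  obtain ⟨hpos, hvel, hsign, hrel, hpar⟩ := h
  have hσ := hsign sM.pos
  have hεσ : sR.env sR.pos
      = (-1) ^ (sM.pos.1.natAbs + sM.pos.2.natAbs + 1) * sM.env sM.pos := by
    rw [← hpos]; exact hrel sM.pos
  have hεrel : ∀ q : ℤ × ℤ, (sqStep sqR sR).env q
      = (-1) ^ (q.1.natAbs + q.2.natAbs + 1) * (sqStep sqM sM).env q := by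
    intro q
    rw [step_env, step_env, ← hpos]
    by_cases hq : q = sM.pos
    · rw [if_pos hq, if_pos hq, hq, hrel sM.pos]; ring
    · rw [if_neg hq, if_neg hq, hrel q]
  have hsign' : ∀ q, (sqStep sqM sM).env q = 1 ∨ (sqStep sqM sM).env q = -1 := by
    intro q; rw [step_env]
    by_cases hq : q = sM.pos
    · rcases hsign sM.pos with h' | h' <;> simp [hq, h']
    · simp only [if_neg hq]; exact hsign q
  by_cases he : Even (sM.pos.1 + sM.pos.2)
  · have hε := sq_eps_even sM.pos he
    have hσR : sR.env sR.pos = -sM.env sM.pos := by rw [hεσ, hε]; ring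
    have hk : sM.vel = 0 ∨ sM.vel = 2 := hpar.mpr he
    have hknew : sqR sR.vel (sR.env sR.pos) = sqM sM.vel (sM.env sM.pos) := by
      rw [← hvel, hσR]
      rcases hk with hk | hk <;> rcases hσ with h' | h' <;> rw [hk, h'] <;> decide
    refine ⟨?_, ?_, hsign', hεrel, ?_⟩
    · rw [step_pos, step_pos]
      exact congrArg₂ (· + ·) hpos (congrArg sqVel hknew.symm)
    · rw [step_vel, step_vel, hknew]
    · rw [step_vel, step_pos]
      obtain ⟨a, ha⟩ := he
      rcases hk with hk | hk <;> rcases hσ with h' | h' <;> rw [hk, h'] <;>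
        · refine ⟨fun hc => absurd hc (by decide), fun hc => False.elim ?_⟩
          first
          | rw [show sqVel (sqM 0 1) = (0, 1) from by decide] at hc
          | rw [show sqVel (sqM 0 (-1)) = (0, -1) from by decide] at hc
          | rw [show sqVel (sqM 2 1) = (0, -1) from by decide] at hc
          | rw [show sqVel (sqM 2 (-1)) = (0, 1) from by decide] at hc
          obtain ⟨b, hb⟩ := hc
          norm_num [Prod.fst_add, Prod.snd_add] at hb
          omega
  · have hε := sq_eps_odd sM.pos he
    have hσR : sR.env sR.pos = sM.env sM.pos := by rw [hεσ, hε]; ring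
    have hk : sM.vel = 1 ∨ sM.vel = 3 := by
      have h0 : ¬ (sM.vel = 0 ∨ sM.vel = 2) := fun hc => he (hpar.mp hc)
      have h4 : ∀ k : ZMod 4, ¬ (k = 0 ∨ k = 2) → k = 1 ∨ k = 3 := by decide
      exact h4 _ h0
    have hknew : sqR sR.vel (sR.env sR.pos) = sqM sM.vel (sM.env sM.pos) := by
      rw [← hvel, hσR]
      rcases hk with hk | hk <;> rcases hσ with h' | h' <;> rw [hk, h'] <;> decide
    refine ⟨?_, ?_, hsign', hεrel, ?_⟩
    · rw [step_pos, step_pos]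
      exact congrArg₂ (· + ·) hpos (congrArg sqVel hknew.symm)
    · rw [step_vel, step_vel, hknew]
    · rw [step_vel, step_pos]
      rw [Int.not_even_iff_odd] at he
      obtain ⟨a, ha⟩ := he
      rcases hk with hk | hk <;> rcases hσ with h' | h' <;> rw [hk, h'] <;>
        · refine ⟨fun _ => ?_, fun _ => by decide⟩
          first
          | rw [show sqVel (sqM 1 1) = (1, 0) from by decide]
          | rw [show sqVel (sqM 1 (-1)) = (-1, 0) from by decide]
          | rw [show sqVel (sqM 3 1) = (-1, 0) from by decide]
          | rw [show sqVel (sqM 3 (-1)) = (1, 0) from by decide]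
          rw [Int.even_iff]
          simp only [Prod.fst_add, Prod.snd_add]
          omega

/-- Theorem 1: if σ_R(x,y) = (-1)^{|x|+|y|+1} σ_M(x,y), then the
flipping mirror walk on σ_M and the flipping rotator walk on σ_R, both starting
at the origin with velocity v₀ = (1,0), have the same positions and the same
velocities at all times. -/
theorem sq_equivalence (σM σR : ℤ × ℤ → ℤ) (hσ : ∀ p, σM p = 1 ∨ σM p = -1)
    (hrel : ∀ p : ℤ × ℤ, σR p = (-1) ^ (p.1.natAbs + p.2.natAbs + 1) * σM p) (t : ℕ) :
    (sqWalk sqM ⟨(0, 0), 0, σM⟩ t).pos = (sqWalk sqR ⟨(0, 0), 0, σR⟩ t).pos ∧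
    (sqWalk sqM ⟨(0, 0), 0, σM⟩ t).vel = (sqWalk sqR ⟨(0, 0), 0, σR⟩ t).vel := by
  have key : ∀ t, SqInv (sqWalk sqM ⟨(0, 0), 0, σM⟩ t) (sqWalk sqR ⟨(0, 0), 0, σR⟩ t) := by
    intro t
    induction t with
    | zero =>
        refine ⟨rfl, rfl, hσ, hrel, ?_⟩
        simp [sqWalk]
    | succ n ih =>
        simp only [sqWalk, Function.iterate_succ_apply'] at ih ⊢
        exact sq_inv_step ih
  exact ⟨(key t).1, (key t).2.1⟩
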